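/- arXiv:1706.00829 — 3 statements merged into one kernel-verified Lean document; each statement's English description precedes it below -/
import Mathlib

section
/- For a simple graph G, the sum over all edges uv of (1/deg(u) + 1/deg(v)) equals S_1(G) + ∑_{i=1}^{n-1} (-1)^{i-1} S_i(G), where S_i(G) counts star subgraphs K_{1,i} and n = |V(G)|. -/
open Finset

private lemma alt_sum_choose (d m : ℕ) (h : d ≤ m) :
    ∑ i ∈ Finset.Icc 1 m, (-1:ℚ)^(i-1) * (d.choose i) = if d = 0 then 0 else 1 := by
  have hfull : ∑ i ∈ Finset.range (m+1), (-1:ℚ)^i * (d.choose i)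
      = if d = 0 then 1 else 0 := by
    have h1 : ∑ i ∈ Finset.range (m+1), (-1:ℚ)^i * (d.choose i)
        = ∑ i ∈ Finset.range (d+1), (-1:ℚ)^i * (d.choose i) := by
      symm
      apply Finset.sum_subset
      · intro x hx
        simp only [Finset.mem_range] at *
        omega
      · intro x _ hx'
        simp only [Finset.mem_range] at *
        rw [Nat.choose_eq_zero_of_lt (by omega)]
        simp
    have h2 := @Int.alternating_sum_range_choose d
    have h3 := congrArg (fun z : ℤ => (z : ℚ)) h2
    push_cast at h3
    rw [h1]
    exact_mod_cast h3
  have hins : Finset.range (m+1) = insert 0 (Finset.Icc 1 m) := by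
    ext x
    simp only [Finset.mem_range, Finset.mem_insert, Finset.mem_Icc]
    omega
  rw [hins, Finset.sum_insert (by simp)] at hfull
  simp only [pow_zero, Nat.choose_zero_right, Nat.cast_one, one_mul] at hfull
  have hneg : ∑ i ∈ Finset.Icc 1 m, (-1:ℚ)^(i-1) * (d.choose i)
      = -∑ i ∈ Finset.Icc 1 m, (-1:ℚ)^i * (d.choose i) := by
    rw [← Finset.sum_neg_distrib]
    apply Finset.sum_congr rfl
    intro i hi
    simp only [Finset.mem_Icc] at hi
    have hi1 : i = (i - 1) + 1 := by omega
    have hpow : (-1:ℚ)^i = (-1)^(i-1) * (-1) := by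
      conv_lhs => rw [hi1]
      rw [pow_succ]
    rw [hpow]
    ring
  rw [hneg]
  have hval : ∑ i ∈ Finset.Icc 1 m, (-1:ℚ)^i * (d.choose i)
      = (if d = 0 then 1 else 0) - 1 := by linarith
  rw [hval]
  split <;> ring

theorem edge_reciprocal_sum_star {V : Type*} [Fintype V] [DecidableEq V]
    (G : SimpleGraph V) [DecidableRel G.Adj] :
    (∑ e ∈ G.edgeFinset,
        Sym2.lift ⟨fun u v => (G.degree u : ℚ)⁻¹ + (G.degree v : ℚ)⁻¹,
          fun u v => by ring⟩ e) =
      (G.edgeFinset.card : ℚ) +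
        ∑ i ∈ Finset.Icc 1 (Fintype.card V - 1),
          (-1 : ℚ) ^ (i - 1) *
            (if i = 1 then (G.edgeFinset.card : ℚ)
             else ∑ v : V, ((G.degree v).choose i : ℚ)) := by
  classical
  set f : V → ℚ := fun v => (G.degree v : ℚ)⁻¹ with hf
  -- LHS equals a sum over darts
  have hdart : ∑ d : G.Dart, f d.fst =
      ∑ e ∈ G.edgeFinset,
        Sym2.lift ⟨fun u v => (G.degree u : ℚ)⁻¹ + (G.degree v : ℚ)⁻¹,
          fun u v => by ring⟩ e := by
    rw [← Finset.sum_fiberwise_of_maps_to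
      (g := SimpleGraph.Dart.edge) (t := G.edgeFinset)
      (fun (d : G.Dart) _ => by rw [SimpleGraph.mem_edgeFinset]; exact d.edge_mem)
      (fun d => f d.fst)]
    apply Finset.sum_congr rfl
    intro e he
    induction e with
    | _ v w =>
      rw [SimpleGraph.mem_edgeFinset, SimpleGraph.mem_edgeSet] at he
      let d : G.Dart := ⟨(v, w), he⟩
      have hfib : ({d' : G.Dart | d'.edge = d.edge} : Finset _) = {d, d.symm} :=
        SimpleGraph.Dart.edge_fiber d
      have hde : d.edge = s(v, w) := rfl
      rw [← hde, hfib, Finset.sum_insert (by simp [SimpleGraph.Dart.symm_ne d]; exact fun h => (SimpleGraph.Dart.symm_ne d) h.symm), Finset.sum_singleton]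
      simp [d, SimpleGraph.Dart.symm, f]
  -- darts sum equals degree-weighted sum
  have hvert : ∑ d : G.Dart, f d.fst = ∑ v : V, (G.degree v : ℚ) * f v := by
    rw [← Finset.sum_fiberwise' Finset.univ (fun (d : G.Dart) => d.fst) f]
    apply Finset.sum_congr rfl
    intro v _
    rw [Finset.sum_const, nsmul_eq_mul]
    congr 1
    exact_mod_cast G.dart_fst_fiber_card_eq_degree v
  have hlhs : ∑ d : G.Dart, f d.fst
      = ∑ v : V, (if G.degree v = 0 then (0:ℚ) else 1) := by
    rw [hvert]
    apply Finset.sum_congr rfl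
    intro v _
    by_cases hv : G.degree v = 0
    · simp [hv, f]
    · rw [if_neg hv, hf]
      exact mul_inv_cancel₀ (by exact_mod_cast hv)
  -- RHS equals the same vertex sum
  have hdegle : ∀ v : V, G.degree v ≤ Fintype.card V - 1 := fun v => by
    have := G.degree_lt_card_verts v; omega
  have hrhsvert : ∑ v : V, (if G.degree v = 0 then (0:ℚ) else 1)
      = ∑ v : V, ∑ i ∈ Finset.Icc 1 (Fintype.card V - 1),
          (-1:ℚ)^(i-1) * ((G.degree v).choose i) := by
    apply Finset.sum_congr rfl
    intro v _
    rw [alt_sum_choose _ _ (hdegle v)]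
  rw [← hdart, hlhs, hrhsvert, Finset.sum_comm]
  -- now pure algebra on the index sum
  by_cases hn : 2 ≤ Fintype.card V
  · have hins : Finset.Icc 1 (Fintype.card V - 1)
        = insert 1 (Finset.Icc 2 (Fintype.card V - 1)) := by
      ext x
      simp only [Finset.mem_Icc, Finset.mem_insert]
      omega
    have hnotmem : (1:ℕ) ∉ Finset.Icc 2 (Fintype.card V - 1) := by simp
    rw [hins, Finset.sum_insert hnotmem, Finset.sum_insert hnotmem]
    have h2E : ∑ v : V, ((G.degree v : ℚ)) = 2 * (G.edgeFinset.card : ℚ) := by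
      exact_mod_cast congrArg (fun n : ℕ => (n : ℚ)) G.sum_degrees_eq_twice_card_edges
    have hrest : ∀ i ∈ Finset.Icc 2 (Fintype.card V - 1),
        ∑ v : V, (-1:ℚ)^(i-1) * ((G.degree v).choose i)
        = (-1:ℚ)^(i-1) * (if i = 1 then (G.edgeFinset.card : ℚ)
            else ∑ v : V, ((G.degree v).choose i : ℚ)) := by
      intro i hi
      simp only [Finset.mem_Icc] at hi
      rw [if_neg (by omega), Finset.mul_sum]
    rw [Finset.sum_congr rfl hrest]
    rw [show ((1:ℕ)-1) = 0 from rfl, if_pos rfl]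
    simp only [pow_zero, one_mul, Nat.choose_one_right]
    rw [h2E]
    ring
  · have hempty : Finset.Icc 1 (Fintype.card V - 1) = ∅ := by
      have : Fintype.card V - 1 = 0 := by omega
      rw [this]; rfl
    have hE0 : G.edgeFinset.card = 0 := by
      have hdeg0 : ∀ v : V, G.degree v = 0 := fun v => by
        have := G.degree_lt_card_verts v; omega
      have h2 := G.sum_degrees_eq_twice_card_edges
      have hsum : ∑ v : V, G.degree v = 0 := by simp [hdeg0]
      rw [hsum] at h2
      omega
    simp [hempty, hE0]
end

section
/- For a simple graph G on n vertices and any natural number p ≥ 1, the general first Zagreb index satisfies Z_p(G) = 2S_1(G) + ∑_{i=2}^{p} i! · S(p,i) · S_i(G), where S(p,i) denotes the Stirling numbers of the second kind. -/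
open Finset

/-- Stirling numbers of the second kind. -/
def stirling2 : ℕ → ℕ → ℕ
  | 0, 0 => 1
  | 0, _ + 1 => 0
  | _ + 1, 0 => 0
  | n + 1, k + 1 => (k + 1) * stirling2 n (k + 1) + stirling2 n k

lemma stirling2_zero_right : ∀ p, 1 ≤ p → stirling2 p 0 = 0
  | _ + 1, _ => rfl

lemma stirling2_eq_zero_of_lt : ∀ p k, p < k → stirling2 p k = 0 := by
  intro p
  induction p with
  | zero => intro k hk; match k, hk with | k + 1, _ => rfl
  | succ n ih =>
    intro k hk
    match k, hk with
    | k + 1, hk =>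
      have h1 : stirling2 n (k + 1) = 0 := ih _ (by omega)
      have h2 : stirling2 n k = 0 := ih _ (by omega)
      show (k + 1) * stirling2 n (k + 1) + stirling2 n k = 0
      rw [h1, h2]; ring

lemma stirling2_one_right : ∀ p, 1 ≤ p → stirling2 p 1 = 1 := by
  intro p
  induction p with
  | zero => omega
  | succ n ih =>
    intro _
    show 1 * stirling2 n 1 + stirling2 n 0 = 1
    rcases Nat.eq_zero_or_pos n with h | h
    · subst h; rfl
    · rw [ih h, stirling2_zero_right n h]

lemma mul_choose_key (n i : ℕ) :
    n * n.choose i = (i + 1) * n.choose (i + 1) + i * n.choose i := by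
  rcases le_or_gt i n with h | h
  · have h2 : (i + 1) * n.choose (i + 1) = n.choose i * (n - i) := by
      rw [mul_comm]; exact Nat.choose_succ_right_eq n i
    rw [h2, mul_comm i, ← Nat.mul_add, Nat.sub_add_cancel h, mul_comm]
  · rw [Nat.choose_eq_zero_of_lt h, Nat.choose_eq_zero_of_lt (by omega)]
    ring

lemma pow_eq_sum_stirling (n : ℕ) :
    ∀ p, n ^ p = ∑ i ∈ range (p + 1), i.factorial * stirling2 p i * n.choose i := by
  intro p
  induction p with
  | zero => simp [stirling2]
  | succ m ih =>
    have step : n ^ (m + 1) =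
        ∑ i ∈ range (m + 1),
          (Nat.factorial (i + 1) * stirling2 m i * n.choose (i + 1)
            + Nat.factorial i * i * stirling2 m i * n.choose i) := by
      rw [pow_succ, ih, Finset.sum_mul]
      refine Finset.sum_congr rfl fun i _ => ?_
      rw [mul_comm _ n, ← mul_assoc, mul_comm n, mul_assoc, mul_choose_key,
        Nat.factorial_succ]
      ring
    rw [step, Finset.sum_add_distrib]
    -- second sum: shift it so it's indexed by i+1
    have shift : (∑ i ∈ range (m + 1), Nat.factorial i * i * stirling2 m i * n.choose i)
        = ∑ i ∈ range (m + 1),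
            Nat.factorial (i + 1) * (i + 1) * stirling2 m (i + 1) * n.choose (i + 1) := by
      have h0 : (∑ i ∈ range (m + 2), Nat.factorial i * i * stirling2 m i * n.choose i)
          = ∑ i ∈ range (m + 1),
              Nat.factorial (i + 1) * (i + 1) * stirling2 m (i + 1) * n.choose (i + 1)
              + Nat.factorial 0 * 0 * stirling2 m 0 * n.choose 0 :=
        Finset.sum_range_succ' _ (m + 1)
      have h1 : (∑ i ∈ range (m + 2), Nat.factorial i * i * stirling2 m i * n.choose i)
          = ∑ i ∈ range (m + 1), Nat.factorial i * i * stirling2 m i * n.choose i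
              + Nat.factorial (m + 1) * (m + 1) * stirling2 m (m + 1) * n.choose (m + 1) :=
        Finset.sum_range_succ _ (m + 1)
      rw [stirling2_eq_zero_of_lt m (m + 1) (by omega)] at h1
      simp only [mul_zero, zero_mul, add_zero] at h0 h1
      omega
    rw [shift, ← Finset.sum_add_distrib]
    -- RHS: strip off the i = 0 term
    rw [Finset.sum_range_succ' (fun i => i.factorial * stirling2 (m + 1) i * n.choose i) (m + 1)]
    rw [stirling2_zero_right (m + 1) (by omega)]
    simp only [mul_zero, zero_mul, add_zero]
    refine Finset.sum_congr rfl fun k _ => ?_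
    show Nat.factorial (k + 1) * stirling2 m k * n.choose (k + 1)
        + Nat.factorial (k + 1) * (k + 1) * stirling2 m (k + 1) * n.choose (k + 1)
      = Nat.factorial (k + 1) * ((k + 1) * stirling2 m (k + 1) + stirling2 m k) * n.choose (k + 1)
    ring

theorem zagreb_star {V : Type*} [Fintype V] [DecidableEq V]
    (G : SimpleGraph V) [DecidableRel G.Adj] (p : ℕ) (hp : 1 ≤ p) :
    (∑ v : V, G.degree v ^ p) =
      2 * G.edgeFinset.card +
        ∑ i ∈ Finset.Icc 2 p,
          i.factorial * stirling2 p i * ∑ v : V, (G.degree v).choose i := by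
  have hswap : (∑ v : V, G.degree v ^ p) =
      ∑ i ∈ range (p + 1), i.factorial * stirling2 p i * ∑ v : V, (G.degree v).choose i := by
    simp_rw [pow_eq_sum_stirling, Finset.mul_sum]
    rw [Finset.sum_comm]
  rw [hswap]
  have hrange : range (p + 1) = insert 0 (insert 1 (Finset.Icc 2 p)) := by
    ext x; simp; omega
  rw [hrange, Finset.sum_insert (by simp), Finset.sum_insert (by simp)]
  rw [stirling2_zero_right p hp, stirling2_one_right p hp]
  simp only [mul_zero, zero_mul, Nat.factorial_one, one_mul, Nat.choose_one_right, zero_add]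
  rw [G.sum_degrees_eq_twice_card_edges]
end

section
/- A simple graph G with no isolated vertices is k-regular (k ≥ 1) if and only if 2S_1(G) = k·S_k(G) when k ≥ 2 (this condition being trivial when k = 1), S_i(G) = C(k,i)·S_k(G) for 2 ≤ i ≤ k, and S_i(G) = 0 for all i > k. -/
open Finset

theorem regular_iff_star_sequence {V : Type*} [Fintype V] [DecidableEq V]
    (G : SimpleGraph V) [DecidableRel G.Adj] (k : ℕ) (hk : 1 ≤ k)
    (hmin : ∀ v : V, 0 < G.degree v) :
    G.IsRegularOfDegree k ↔
      ((2 ≤ k → 2 * G.edgeFinset.card = k * ∑ v : V, (G.degree v).choose k) ∧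
        (∀ i, 2 ≤ i → i ≤ k →
          (∑ v : V, (G.degree v).choose i) =
            k.choose i * ∑ v : V, (G.degree v).choose k) ∧
        ∀ i, k < i → (∑ v : V, (G.degree v).choose i) = 0) := by
  constructor
  · intro h
    have hdeg : ∀ v : V, G.degree v = k := h
    have hs := G.sum_degrees_eq_twice_card_edges
    refine ⟨?_, ?_, ?_⟩
    · intro _
      simp only [hdeg] at hs ⊢
      rw [← hs]
      simp [Finset.sum_const, Nat.choose_self, mul_comm]
    · intro i _ _
      simp [hdeg, Finset.sum_const, Nat.choose_self, mul_comm]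
    · intro i hi
      simp [hdeg, Nat.choose_eq_zero_of_lt hi]
  · rintro ⟨h1, _, h3⟩
    have hle : ∀ v : V, G.degree v ≤ k := by
      intro v
      have hz := h3 (k + 1) (Nat.lt_succ_self k)
      have := (Finset.sum_eq_zero_iff.mp hz) v (Finset.mem_univ v)
      have := Nat.choose_eq_zero_iff.mp this
      omega
    rcases eq_or_lt_of_le hk with hk1 | hk2
    · intro v
      have := hmin v
      have := hle v
      omega
    · have h1' := h1 hk2
      have hs := G.sum_degrees_eq_twice_card_edges
      have key : ∑ v : V, k * (G.degree v).choose k = ∑ v : V, G.degree v := by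
        rw [hs, h1', Finset.mul_sum]
      have hpt : ∀ v ∈ Finset.univ, k * (G.degree v).choose k ≤ G.degree v := by
        intro v _
        rcases lt_or_eq_of_le (hle v) with hlt | heq
        · simp [Nat.choose_eq_zero_of_lt hlt]
        · rw [heq, Nat.choose_self, mul_one]
      have heq := (Finset.sum_eq_sum_iff_of_le hpt).mp key
      intro v
      have hv := heq v (Finset.mem_univ v)
      rcases lt_or_eq_of_le (hle v) with hlt | hEq
      · rw [Nat.choose_eq_zero_of_lt hlt, mul_zero] at hv
        have := hmin v
        omega
      · exact hEq
end
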